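/- With the grading of the Weyl algebra D by deg x = 1, deg ∂ = -1, the map D_{,j}/（x^n D)_j → D_{,n+j}/(x^n D)_{n+j} induced by p ↦ [x^n, p] is surjective for every j ≤ -1, and is an isomorphism for j ≤ -n. -/
import Mathlib


/-!
STATEMENT 4: With the Weyl algebra graded by deg x = 1, deg ∂ = -1, the map
(D/x^n D)_j → (D/x^n D)_{n+j} induced by p ↦ [x^n, p] is surjective for every
j ≤ -1, and is an isomorphism for j ≤ -n.
-/
/-- The defining relation of the Weyl algebra: ∂·x = x·∂ + 1. -/
inductive WeylRel : FreeAlgebra ℂ (Fin 2) → FreeAlgebra ℂ (Fin 2) → Prop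
  | comm : WeylRel (FreeAlgebra.ι ℂ (1 : Fin 2) * FreeAlgebra.ι ℂ (0 : Fin 2))
      (FreeAlgebra.ι ℂ (0 : Fin 2) * FreeAlgebra.ι ℂ (1 : Fin 2) + 1)

/-- The Weyl algebra ℂ[x,∂]. -/
abbrev Weyl : Type := RingQuot WeylRel

noncomputable def wX : Weyl := RingQuot.mkAlgHom ℂ WeylRel (FreeAlgebra.ι ℂ (0 : Fin 2))

noncomputable def wD : Weyl := RingQuot.mkAlgHom ℂ WeylRel (FreeAlgebra.ι ℂ (1 : Fin 2))

/-- The degree-`j` homogeneous component of the Weyl algebra (deg x = 1, deg ∂ = -1),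
spanned by the monomials x^a ∂^b with a - b = j. -/
noncomputable def Wcomp (j : ℤ) : Submodule ℂ Weyl :=
  Submodule.span ℂ {w | ∃ a b : ℕ, (a : ℤ) - (b : ℤ) = j ∧ w = wX ^ a * wD ^ b}

/-- The left ideal x^n·D, as a ℂ-subspace of the Weyl algebra. -/
noncomputable def WleftIdeal (n : ℕ) : Submodule ℂ Weyl :=
  LinearMap.range (LinearMap.mulLeft ℂ (wX ^ n))


open Polynomial

lemma wDX : wD * wX = wX * wD + 1 := by
  have h := RingQuot.mkAlgHom_rel ℂ WeylRel.comm
  simpa [wX, wD, map_mul, map_add, map_one] using h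

lemma wD_pow_X (m : ℕ) : wD * wX ^ m = wX ^ m * wD + (m : ℂ) • wX ^ (m - 1) := by
  induction m with
  | zero => simp
  | succ m ih =>
    rw [pow_succ, ← mul_assoc, ih, add_mul, mul_assoc, wDX, mul_add, mul_one]
    have hx : (m : ℂ) • wX ^ (m - 1) * wX = (m : ℂ) • wX ^ m := by
      cases m with
      | zero => simp
      | succ k => rw [smul_mul_assoc, Nat.succ_sub_one, ← pow_succ]
    rw [hx, Nat.add_sub_cancel, ← mul_assoc, ← pow_succ]
    push_cast
    rw [add_smul, one_smul]
    abel

lemma wDb_Xn (b n : ℕ) : wD ^ b * wX ^ n =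
    ∑ k ∈ Finset.range (b+1),
      ((b.choose k * n.descFactorial k : ℕ) : ℂ) • (wX ^ (n - k) * wD ^ (b - k)) := by
  induction b with
  | zero => simp
  | succ b ih =>
    have step : wD ^ (b+1) * wX ^ n =
        (∑ k ∈ Finset.range (b+1),
          ((b.choose k * n.descFactorial k : ℕ) : ℂ) • (wX ^ (n-k) * wD ^ (b+1-k)))
      + ∑ k ∈ Finset.range (b+1),
          ((b.choose k * n.descFactorial (k+1) : ℕ) : ℂ) • (wX ^ (n-(k+1)) * wD ^ (b-k)) := by
      rw [pow_succ', mul_assoc, ih, Finset.mul_sum, ← Finset.sum_add_distrib]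
      refine Finset.sum_congr rfl fun k hk => ?_
      have hk' : k ≤ b := Nat.lt_succ_iff.mp (Finset.mem_range.mp hk)
      have e1 : b - k + 1 = b + 1 - k := by omega
      have e2 : n - k - 1 = n - (k+1) := by omega
      have e3 : ((b.choose k * n.descFactorial k : ℕ) : ℂ) * ((n - k : ℕ) : ℂ)
          = ((b.choose k * n.descFactorial (k+1) : ℕ) : ℂ) := by
        push_cast [Nat.descFactorial_succ]; ring
      rw [mul_smul_comm, ← mul_assoc, wD_pow_X, add_mul, mul_assoc, ← pow_succ',
        smul_mul_assoc, smul_add, smul_smul, e1, e2, e3]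
    rw [step]
    have hF : ∀ k ∈ Finset.range (b+1),
        (((b+1).choose (k+1) * n.descFactorial (k+1) : ℕ) : ℂ) • (wX ^ (n-(k+1)) * wD ^ (b+1-(k+1)))
        = ((b.choose k * n.descFactorial (k+1) : ℕ) : ℂ) • (wX ^ (n-(k+1)) * wD ^ (b-k))
        + ((b.choose (k+1) * n.descFactorial (k+1) : ℕ) : ℂ) • (wX ^ (n-(k+1)) * wD ^ (b-k)) := by
      intro k hk
      rw [Nat.succ_sub_succ, Nat.choose_succ_succ, add_mul, Nat.cast_add, add_smul]
    rw [Finset.sum_range_succ'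
      (fun k => (((b+1).choose k * n.descFactorial k : ℕ) : ℂ) • (wX ^ (n-k) * wD ^ (b+1-k))) (b+1),
      Finset.sum_congr rfl hF, Finset.sum_add_distrib]
    have hf : (∑ k ∈ Finset.range (b+1),
        ((b.choose k * n.descFactorial k : ℕ) : ℂ) • (wX ^ (n-k) * wD ^ (b+1-k)))
        = (∑ k ∈ Finset.range (b+1),
            ((b.choose (k+1) * n.descFactorial (k+1) : ℕ) : ℂ) • (wX ^ (n-(k+1)) * wD ^ (b-k)))
          + (((b+1).choose 0 * n.descFactorial 0 : ℕ) : ℂ) • (wX ^ (n-0) * wD ^ (b+1-0)) := by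
      rw [Finset.sum_range_succ'
        (fun k => ((b.choose k * n.descFactorial k : ℕ) : ℂ) • (wX ^ (n-k) * wD ^ (b+1-k))) b]
      congr 1
      · rw [Finset.sum_range_succ]
        have : ((b.choose (b+1) * n.descFactorial (b+1) : ℕ) : ℂ) • (wX ^ (n-(b+1)) * wD ^ (b-b)) = 0 := by
          rw [Nat.choose_succ_self, Nat.zero_mul, Nat.cast_zero, zero_smul]
        rw [this, add_zero]
        refine Finset.sum_congr rfl fun k hk => ?_
        have e4 : b + 1 - (k+1) = b - k := by omega
        rw [e4]
      · simp
    rw [hf]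
    abel

noncomputable def wF : Fin 2 → Module.End ℂ (Polynomial ℂ) :=
  ![LinearMap.mulLeft ℂ (Polynomial.X : Polynomial ℂ), Polynomial.derivative]

noncomputable def wRep : Weyl →ₐ[ℂ] Module.End ℂ (Polynomial ℂ) :=
  RingQuot.liftAlgHom ℂ ⟨FreeAlgebra.lift ℂ wF, by
    intro x y h
    cases h
    simp only [map_mul, map_add, map_one, FreeAlgebra.lift_ι_apply]
    refine LinearMap.ext fun p => ?_
    simp only [wF, Module.End.mul_apply, LinearMap.add_apply, Module.End.one_apply,
      Matrix.cons_val_zero, Matrix.cons_val_one, Matrix.head_cons,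
      LinearMap.mulLeft_apply, derivative_mul, derivative_X, one_mul]
    ring⟩

lemma wRep_X : wRep wX = LinearMap.mulLeft ℂ (Polynomial.X : Polynomial ℂ) := by
  rw [wRep, wX, RingQuot.liftAlgHom_mkAlgHom_apply, FreeAlgebra.lift_ι_apply]
  rfl

lemma wRep_D : wRep wD = (Polynomial.derivative : Polynomial ℂ →ₗ[ℂ] Polynomial ℂ) := by
  rw [wRep, wD, RingQuot.liftAlgHom_mkAlgHom_apply, FreeAlgebra.lift_ι_apply]
  rfl

lemma wRep_mono (a b M : ℕ) :
    wRep (wX ^ a * wD ^ b) (Polynomial.X ^ M)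
      = (M.descFactorial b : ℂ) • Polynomial.X ^ (a + (M - b)) := by
  have h1 : wRep (wX ^ a) = LinearMap.mulLeft ℂ ((Polynomial.X : Polynomial ℂ) ^ a) := by
    rw [map_pow, wRep_X, LinearMap.pow_mulLeft]
  have h2 : wRep (wD ^ b) = (Polynomial.derivative : Polynomial ℂ →ₗ[ℂ] Polynomial ℂ) ^ b := by
    rw [map_pow, wRep_D]
  rw [map_mul, h1, h2, Module.End.mul_apply, Module.End.pow_apply,
    Polynomial.iterate_derivative_X_pow_eq_smul, LinearMap.mulLeft_apply,
    mul_smul_comm, ← pow_add]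

lemma wRep_ideal_coeff {n : ℕ} {w : Weyl} (hw : w ∈ WleftIdeal n) (f : Polynomial ℂ)
    {i : ℕ} (hi : i < n) : (wRep w f).coeff i = 0 := by
  obtain ⟨u, rfl⟩ := hw
  rw [LinearMap.mulLeft_apply, map_mul, Module.End.mul_apply, map_pow, wRep_X,
    LinearMap.pow_mulLeft, LinearMap.mulLeft_apply, mul_comm, Polynomial.coeff_mul_X_pow']
  exact if_neg (by omega)

lemma wcomp_repr {j : ℤ} (hj : j ≤ -1) {p : Weyl} (hp : p ∈ Wcomp j) :
    ∃ μ : ℕ →₀ ℂ, p = μ.sum fun a c => c • (wX ^ a * wD ^ (a + (-j).toNat)) := by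
  induction hp using Submodule.span_induction with
  | mem w hw =>
    obtain ⟨a, b, hab, rfl⟩ := hw
    refine ⟨Finsupp.single a 1, ?_⟩
    rw [Finsupp.sum_single_index (by rw [zero_smul])]
    have : b = a + (-j).toNat := by omega
    rw [this, one_smul]
  | zero => exact ⟨0, by rw [Finsupp.sum_zero_index]⟩
  | add x y hx hy ihx ihy =>
    obtain ⟨μ, rfl⟩ := ihx
    obtain ⟨ν, rfl⟩ := ihy
    exact ⟨μ + ν, (Finsupp.sum_add_index'
      (h := fun a c => c • (wX ^ a * wD ^ (a + (-j).toNat)))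
      (fun a => zero_smul ℂ _) (fun a c₁ c₂ => add_smul c₁ c₂ _)).symm⟩
  | smul c x hx ihx =>
    obtain ⟨μ, rfl⟩ := ihx
    refine ⟨c • μ, ?_⟩
    rw [Finsupp.sum_smul_index
      (h := fun a c => c • (wX ^ a * wD ^ (a + (-j).toNat)))
      (fun i => zero_smul ℂ _), Finsupp.smul_sum]
    exact Finset.sum_congr rfl fun a _ => (mul_smul c (μ a) _).symm

lemma ideal_mul_right {n : ℕ} {w : Weyl} (hw : w ∈ WleftIdeal n) (v : Weyl) :
    w * v ∈ WleftIdeal n := by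
  obtain ⟨u, rfl⟩ := hw
  exact ⟨u * v, by simp [LinearMap.mulLeft_apply, mul_assoc]⟩

lemma inj_part (n : ℕ) (hn : 1 ≤ n) (j : ℤ) (hjn : j ≤ -(n : ℤ)) (p : Weyl) (hp : p ∈ Wcomp j)
    (h0 : wX ^ n * p - p * wX ^ n ∈ WleftIdeal n) : p ∈ WleftIdeal n := by
  have hj1 : j ≤ -1 := by omega
  obtain ⟨μ, rfl⟩ := wcomp_repr hj1 hp
  set e : ℕ := (-j).toNat with he
  have hen : n ≤ e := by omega
  set g : ℕ → ℂ → Weyl := fun a c => c • (wX ^ a * wD ^ (a + e)) with hg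
  have hxp : wX ^ n * μ.sum g ∈ WleftIdeal n := ⟨μ.sum g, by rw [LinearMap.mulLeft_apply]⟩
  have hpx : μ.sum g * wX ^ n ∈ WleftIdeal n := by
    have h := Submodule.sub_mem _ hxp h0
    rwa [sub_sub_cancel] at h
  set s₁ : Finset ℕ := μ.support.filter (fun a => a < n) with hs₁
  set s₂ : Finset ℕ := μ.support.filter (fun a => ¬ a < n) with hs₂
  set p₁ : Weyl := ∑ a ∈ s₁, g a (μ a) with hp₁
  set p₂ : Weyl := ∑ a ∈ s₂, g a (μ a) with hp₂
  have hsplit : μ.sum g = p₁ + p₂ := by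
    rw [Finsupp.sum, hp₁, hp₂, hs₁, hs₂, Finset.sum_filter_add_sum_filter_not]
  have h2mem : ∀ a ∈ s₂, g a (μ a) ∈ WleftIdeal n := by
    intro a ha
    have han : n ≤ a := by
      have := (Finset.mem_filter.mp ha).2; omega
    refine Submodule.smul_mem _ _ ⟨wX ^ (a - n) * wD ^ (a + e), ?_⟩
    rw [LinearMap.mulLeft_apply, ← mul_assoc, ← pow_add]
    congr 2
    omega
  have hp2 : p₂ ∈ WleftIdeal n := Submodule.sum_mem _ h2mem
  have hp1x : p₁ * wX ^ n ∈ WleftIdeal n := by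
    have h := Submodule.sub_mem _ hpx (ideal_mul_right hp2 (wX ^ n))
    rwa [hsplit, add_mul, add_sub_cancel_right] at h
  have key : ∀ i, i < n → ∑ a ∈ s₁, μ a * ((e + i).descFactorial (a + e) : ℂ) = 0 := by
    intro i hi
    have hev : wRep p₁ (Polynomial.X ^ (e + i))
        = (∑ a ∈ s₁, μ a * ((e + i).descFactorial (a + e) : ℂ)) • Polynomial.X ^ i := by
      rw [hp₁, map_sum, LinearMap.sum_apply, Finset.sum_smul]
      refine Finset.sum_congr rfl fun a _ => ?_
      show wRep (μ a • (wX ^ a * wD ^ (a + e))) (Polynomial.X ^ (e + i))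
        = (μ a * ((e + i).descFactorial (a + e) : ℂ)) • Polynomial.X ^ i
      rw [map_smul, LinearMap.smul_apply, wRep_mono, smul_smul]
      by_cases hai : a ≤ i
      · congr 2
        omega
      · rw [Nat.descFactorial_eq_zero_iff_lt.mpr (by omega)]
        simp
    set m : ℕ := e - n + i with hm
    have hnm : n + m = e + i := by omega
    have hcoeff : (wRep (p₁ * wX ^ n) (Polynomial.X ^ m)).coeff i = 0 :=
      wRep_ideal_coeff hp1x _ hi
    have hxn : wRep (wX ^ n) = LinearMap.mulLeft ℂ ((Polynomial.X : Polynomial ℂ) ^ n) := by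
      rw [map_pow, wRep_X, LinearMap.pow_mulLeft]
    rw [map_mul, Module.End.mul_apply, hxn, LinearMap.mulLeft_apply, ← pow_add, hnm, hev] at hcoeff
    simpa [Polynomial.coeff_smul, Polynomial.coeff_X_pow] using hcoeff
  have hzero : ∀ a, a ∈ s₁ → μ a = 0 := by
    intro a
    induction a using Nat.strong_induction_on with
    | _ a IH =>
      intro ha
      have han : a < n := (Finset.mem_filter.mp ha).2
      have hk := key a han
      have hsingle : ∀ b ∈ s₁, b ≠ a → μ b * ((e + a).descFactorial (b + e) : ℂ) = 0 := by
        intro b hb hne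
        rcases lt_or_gt_of_ne hne with h | h
        · rw [IH b h hb, zero_mul]
        · rw [Nat.descFactorial_eq_zero_iff_lt.mpr (by omega), Nat.cast_zero, mul_zero]
      rw [Finset.sum_eq_single a hsingle (fun h => absurd ha h)] at hk
      rw [add_comm a e, Nat.descFactorial_self] at hk
      exact (mul_eq_zero.mp hk).resolve_right
        (Nat.cast_ne_zero.mpr (Nat.factorial_ne_zero _))
  have hp1 : p₁ = 0 := Finset.sum_eq_zero fun a ha => by
    show μ a • (wX ^ a * wD ^ (a + e)) = 0
    rw [hzero a ha, zero_smul]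
  rw [hsplit, hp1, zero_add]
  exact hp2

lemma mkQ_eq_zero_of_mem {n : ℕ} {w : Weyl} (hw : w ∈ WleftIdeal n) :
    (WleftIdeal n).mkQ w = 0 := by
  rwa [Submodule.mkQ_apply, Submodule.Quotient.mk_eq_zero]

lemma mem_ideal_of_le {n c : ℕ} (hc : n ≤ c) (d : ℕ) :
    wX ^ c * wD ^ d ∈ WleftIdeal n := by
  refine ⟨wX ^ (c - n) * wD ^ d, ?_⟩
  rw [LinearMap.mulLeft_apply, ← mul_assoc, ← pow_add]
  congr 2
  omega

noncomputable def Cmap (n : ℕ) : Weyl →ₗ[ℂ] Weyl :=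
  LinearMap.mulLeft ℂ (wX ^ n) - LinearMap.mulRight ℂ (wX ^ n)

lemma surj_main (n : ℕ) (hn : 1 ≤ n) (j : ℤ) (hj : j ≤ -1) :
    Submodule.map (WleftIdeal n).mkQ (Wcomp ((n : ℤ) + j))
      ≤ Submodule.map ((WleftIdeal n).mkQ ∘ₗ Cmap n) (Wcomp j) := by
  set S := Submodule.map ((WleftIdeal n).mkQ ∘ₗ Cmap n) (Wcomp j) with hS
  have main : ∀ t : ℕ, ∀ c d : ℕ, (c : ℤ) - d = (n : ℤ) + j → n - c ≤ t →
      (WleftIdeal n).mkQ (wX ^ c * wD ^ d) ∈ S := by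
    intro t
    induction t with
    | zero =>
      intro c d hcd hc
      have hc' : n ≤ c := by omega
      rw [mkQ_eq_zero_of_mem (mem_ideal_of_le hc' d)]
      exact Submodule.zero_mem S
    | succ t IH =>
      intro c d hcd hc
      by_cases hcn : n ≤ c
      · rw [mkQ_eq_zero_of_mem (mem_ideal_of_le hcn d)]
        exact Submodule.zero_mem S
      push_neg at hcn
      set b : ℕ := n + d with hb
      set p : Weyl := wX ^ c * wD ^ b with hp
      have hpW : p ∈ Wcomp j := Submodule.subset_span ⟨c, b, by push_cast; omega, rfl⟩
      have hxnp : (WleftIdeal n).mkQ (wX ^ n * p) = 0 :=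
        mkQ_eq_zero_of_mem ⟨p, by rw [LinearMap.mulLeft_apply]⟩
      set F : ℕ → Weyl ⧸ WleftIdeal n := fun k =>
        ((b.choose k * n.descFactorial k : ℕ) : ℂ) •
          (WleftIdeal n).mkQ (wX ^ (c + (n - k)) * wD ^ (b - k)) with hF
      have hsum : ∑ k ∈ Finset.range (b + 1), F k
          = -(((WleftIdeal n).mkQ ∘ₗ Cmap n) p) := by
        have hpx : p * wX ^ n = ∑ k ∈ Finset.range (b + 1),
            ((b.choose k * n.descFactorial k : ℕ) : ℂ) •
              (wX ^ (c + (n - k)) * wD ^ (b - k)) := by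
          rw [hp, mul_assoc, wDb_Xn, Finset.mul_sum]
          refine Finset.sum_congr rfl fun k _ => ?_
          rw [mul_smul_comm, ← mul_assoc, ← pow_add]
        rw [LinearMap.comp_apply, Cmap, LinearMap.sub_apply, LinearMap.mulLeft_apply,
          LinearMap.mulRight_apply, map_sub, hxnp, zero_sub, neg_neg, hpx, map_sum]
        exact Finset.sum_congr rfl fun k _ => by rw [map_smul]
      have hSsum : ∑ k ∈ Finset.range (b + 1), F k ∈ S := by
        rw [hsum]
        exact Submodule.neg_mem S ⟨p, hpW, rfl⟩
      have hnmem : n ∈ Finset.range (b + 1) := Finset.mem_range.mpr (by omega)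
      have herase : ∑ k ∈ (Finset.range (b + 1)).erase n, F k ∈ S := by
        refine Submodule.sum_mem S fun k hk => ?_
        have hkne : k ≠ n := (Finset.mem_erase.mp hk).1
        have hkb : k < b + 1 := Finset.mem_range.mp (Finset.mem_erase.mp hk).2
        rw [hF]
        by_cases hkc : k ≤ c
        · simp only []
          rw [mkQ_eq_zero_of_mem (mem_ideal_of_le (by omega) _), smul_zero]
          exact Submodule.zero_mem S
        by_cases hkn : k < n
        · exact Submodule.smul_mem S _ (IH (c + (n - k)) (b - k) (by push_cast; omega) (by omega))
        · simp only []
          rw [Nat.descFactorial_eq_zero_iff_lt.mpr (by omega), Nat.mul_zero, Nat.cast_zero,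
            zero_smul]
          exact Submodule.zero_mem S
      have hFn : F n ∈ S := by
        have h := Finset.add_sum_erase (Finset.range (b + 1)) F hnmem
        have : F n = (∑ k ∈ Finset.range (b + 1), F k)
            - ∑ k ∈ (Finset.range (b + 1)).erase n, F k := by
          rw [← h]; abel
        rw [this]
        exact Submodule.sub_mem S hSsum herase
      have hγ : ((b.choose n * n.descFactorial n : ℕ) : ℂ) ≠ 0 := by
        refine Nat.cast_ne_zero.mpr (Nat.mul_ne_zero ?_ ?_)
        · exact (Nat.choose_pos (by omega)).ne'
        · rw [Nat.descFactorial_self]; exact Nat.factorial_ne_zero n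
      have heq : F n = ((b.choose n * n.descFactorial n : ℕ) : ℂ) •
          (WleftIdeal n).mkQ (wX ^ c * wD ^ d) := by
        have e1 : c + (n - n) = c := by omega
        have e2 : b - n = d := by omega
        rw [hF]
        simp only []
        rw [e1, e2]
      have := Submodule.smul_mem S (((b.choose n * n.descFactorial n : ℕ) : ℂ))⁻¹ hFn
      rw [heq, smul_smul, inv_mul_cancel₀ hγ, one_smul] at this
      exact this
  rw [Wcomp, Submodule.map_span, Submodule.span_le]
  rintro _ ⟨w, ⟨c, d, hcd, rfl⟩, rfl⟩
  exact main (n - c + 1) c d hcd (by omega)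

theorem stmt4 (n : ℕ) (hn : 1 ≤ n) (j : ℤ) (hj : j ≤ -1) :
    -- surjectivity of the induced map (D/x^nD)_j → (D/x^nD)_{n+j}
    (∀ q ∈ Submodule.map (WleftIdeal n).mkQ (Wcomp ((n : ℤ) + j)),
      ∃ p ∈ Wcomp j, (WleftIdeal n).mkQ (wX ^ n * p - p * wX ^ n) = q) ∧
    -- for j ≤ -n it is moreover injective, hence an isomorphism
    (j ≤ -(n : ℤ) → ∀ p ∈ Wcomp j,
      (WleftIdeal n).mkQ (wX ^ n * p - p * wX ^ n) = 0 → (WleftIdeal n).mkQ p = 0) := by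
  constructor
  · intro q hq
    obtain ⟨p, hp, hpq⟩ := surj_main n hn j hj hq
    refine ⟨p, hp, ?_⟩
    rw [LinearMap.comp_apply, Cmap, LinearMap.sub_apply, LinearMap.mulLeft_apply,
      LinearMap.mulRight_apply] at hpq
    exact hpq
  · intro hjn p hp h0
    have h0' : wX ^ n * p - p * wX ^ n ∈ WleftIdeal n := by
      rwa [Submodule.mkQ_apply, Submodule.Quotient.mk_eq_zero] at h0
    have := inj_part n hn j hjn p hp h0'
    rwa [Submodule.mkQ_apply, Submodule.Quotient.mk_eq_zero]
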